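/- For any positive integers r, t, the torus C_{4r} □ C_{4t} has edge metric dimension 3. -/

import Mathlib

open SimpleGraph

/-- Distance from a vertex `v` to an edge `e = uw`: `min (d v u) (d v w)`. -/
noncomputable def edgeDist {V : Type*} (G : SimpleGraph V) (v : V) (e : Sym2 V) : ℕ :=
  Sym2.lift ⟨fun u w => min (G.dist v u) (G.dist v w), fun u w => by simp [min_comm]⟩ e

/-- `S` is an edge metric generator: every two distinct edges are distinguished
by some vertex of `S`. -/
def IsEdgeMetricGenerator {V : Type*} (G : SimpleGraph V) (S : Set V) : Prop :=
  ∀ e₁ ∈ G.edgeSet, ∀ e₂ ∈ G.edgeSet, e₁ ≠ e₂ →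
    ∃ v ∈ S, edgeDist G v e₁ ≠ edgeDist G v e₂

/-- The edge metric dimension: minimum cardinality of an edge metric generator. -/
noncomputable def edim {V : Type*} (G : SimpleGraph V) : ℕ :=
  sInf {k | ∃ S : Finset V, S.card = k ∧ IsEdgeMetricGenerator G ↑S}

/-!
Lower bound: seen from a vertex `v`, every edge at a vertex `u` lies at distance `d(v,u)` or
`d(v,u) - 1`, while `u` sees all of them at distance `0`; as every vertex of the torus has degree
`4 ≥ 3`, no set of two vertices resolves the edges at one of its members.

Upper bound: write `D_a(x)` and `E_a(x)` for the distances in a cycle from `a` to the vertex `x` and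
to the edge `{x, x + 1}`. From `(a, b)` a horizontal edge `{(x, y), (x + 1, y)}` is at distance
`E_a(x) + D_b(y)` and a vertical one at `D_a(x) + E_b(y)`. For the landmarks `(0, 0)`, `(0, 2t)`,
`(r, t)`, antipodality (`D_0 + D_{2t} = 2t`, `E_0 + E_{2t} = 2t - 1`) lets the first two tell
horizontal from vertical edges by parity and recover `E_0` and `D_0` of the coordinates. These
fix the edge up to the reflections `x ↦ -1 - x` and `y ↦ -y`, which the third landmark, a quarter
turn away, breaks.
-/

namespace SimpleGraph

variable {V W : Type*} {G : SimpleGraph V} {H : SimpleGraph W}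

theorem dist_eq_of_descent {u : V} (f : V → ℕ) (hu : f u = 0)
    (hlip : ∀ x y, G.Adj x y → f y ≤ f x + 1)
    (hdesc : ∀ v ≠ u, ∃ w, G.Adj w v ∧ f w + 1 = f v) (v : V) :
    G.dist u v = f v := by
  have walk_of_eq : ∀ n v, f v = n → ∃ p : G.Walk u v, p.length = n := by
    intro n
    induction n with
    | zero =>
      intro v hv
      obtain rfl : v = u := by
        by_contra hvu
        obtain ⟨w, -, hw⟩ := hdesc v hvu
        omega
      exact ⟨.nil, rfl⟩
    | succ n ih =>
      intro v hv
      obtain ⟨w, hwv, hw⟩ := hdesc v (by rintro rfl; omega)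
      obtain ⟨p, hp⟩ := ih w (by omega)
      exact ⟨p.concat hwv, by simp [hp]⟩
  have le_add_length : ∀ {x y} (p : G.Walk x y), f y ≤ f x + p.length := by
    intro x y p
    induction p with
    | nil => simp
    | cons h p ih =>
      have := hlip _ _ h
      rw [Walk.length_cons]
      omega
  obtain ⟨p, hp⟩ := walk_of_eq _ v rfl
  refine le_antisymm (hp ▸ dist_le p) ?_
  obtain ⟨q, hq⟩ := p.reachable.exists_walk_length_eq_dist
  simpa [hu, hq] using le_add_length q

theorem dist_boxProd (hG : G.Preconnected) (hH : H.Preconnected) (x y : V × W) :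
    (G □ H).dist x y = G.dist x.1 y.1 + H.dist x.2 y.2 := by
  apply Nat.cast_injective (R := ℕ∞)
  rw [(hG.boxProd hH x y).coe_dist_eq_edist, edist_boxProd, Nat.cast_add,
    (hG _ _).coe_dist_eq_edist, (hH _ _).coe_dist_eq_edist]

end SimpleGraph

section EdgeDist

variable {V W : Type*} {G : SimpleGraph V} {H : SimpleGraph W}

theorem edgeDist_mk (v u w : V) : edgeDist G v s(u, w) = min (G.dist v u) (G.dist v w) :=
  rfl

theorem edgeDist_eq_or_add_one_eq_of_adj {u w : V} (h : G.Adj u w) (v : V) :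
    edgeDist G v s(u, w) = G.dist v u ∨ edgeDist G v s(u, w) + 1 = G.dist v u := by
  rw [edgeDist_mk]
  rcases h.diff_dist_adj (u := v) with h | h | h <;> omega

theorem edgeDist_boxProd_left (hG : G.Preconnected) (hH : H.Preconnected) (a : V × W)
    (x x' : V) (y : W) :
    edgeDist (G □ H) a s((x, y), (x', y)) = edgeDist G a.1 s(x, x') + H.dist a.2 y := by
  simp only [edgeDist_mk, dist_boxProd hG hH, min_add_add_right]

theorem edgeDist_boxProd_right (hG : G.Preconnected) (hH : H.Preconnected) (a : V × W)
    (x : V) (y y' : W) :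
    edgeDist (G □ H) a s((x, y), (x, y')) = G.dist a.1 x + edgeDist H a.2 s(y, y') := by
  simp only [edgeDist_mk, dist_boxProd hG hH, min_add_add_left]

theorem IsEdgeMetricGenerator.mono {S T : Set V} (h : IsEdgeMetricGenerator G S)
    (hST : S ⊆ T) : IsEdgeMetricGenerator G T := fun e₁ he₁ e₂ he₂ hne =>
  let ⟨v, hv, hd⟩ := h e₁ he₁ e₂ he₂ hne
  ⟨v, hST hv, hd⟩

theorem not_isEdgeMetricGenerator_pair {u w₁ w₂ w₃ : V} (h₁ : G.Adj u w₁) (h₂ : G.Adj u w₂)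
    (h₃ : G.Adj u w₃) (h₁₂ : w₁ ≠ w₂) (h₁₃ : w₁ ≠ w₃) (h₂₃ : w₂ ≠ w₃) (v : V) :
    ¬IsEdgeMetricGenerator G {u, v} := by
  intro hS
  have separates : ∀ {w w'}, G.Adj u w → G.Adj u w' → w ≠ w' →
      edgeDist G v s(u, w) ≠ edgeDist G v s(u, w') := by
    intro w w' hw hw' hne
    obtain ⟨z, hz, hd⟩ := hS s(u, w) hw s(u, w') hw' (mt Sym2.congr_right.mp hne)
    rcases hz with rfl | rfl
    · simp [edgeDist_mk] at hd
    · exact hd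
  have := separates h₁ h₂ h₁₂
  have := separates h₁ h₃ h₁₃
  have := separates h₂ h₃ h₂₃
  rcases edgeDist_eq_or_add_one_eq_of_adj h₁ v with _ | _ <;>
    rcases edgeDist_eq_or_add_one_eq_of_adj h₂ v with _ | _ <;>
    rcases edgeDist_eq_or_add_one_eq_of_adj h₃ v with _ | _ <;> omega

theorem three_le_card_of_isEdgeMetricGenerator [Nonempty V] [∀ v, Fintype (G.neighborSet v)]
    (hdeg : ∀ v, 3 ≤ G.degree v) {S : Finset V} (hS : IsEdgeMetricGenerator G S) :
    3 ≤ S.card := by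
  classical
  by_contra! hcard
  obtain ⟨u, v, hSuv⟩ : ∃ u v, S ⊆ {u, v} := by
    obtain rfl | ⟨u, hu⟩ := S.eq_empty_or_nonempty
    · exact ⟨Classical.arbitrary V, Classical.arbitrary V, Finset.empty_subset _⟩
    obtain ⟨v, hv⟩ := Finset.card_le_one_iff_subset_singleton.mp
      (show (S.erase u).card ≤ 1 by rw [Finset.card_erase_of_mem hu]; omega)
    exact ⟨u, v, Finset.insert_erase hu ▸ Finset.insert_subset_insert u hv⟩
  obtain ⟨w₁, hw₁, w₂, hw₂, w₃, hw₃, h₁₂, h₁₃, h₂₃⟩ := Finset.two_lt_card.mp (hdeg u)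
  rw [mem_neighborFinset] at hw₁ hw₂ hw₃
  exact not_isEdgeMetricGenerator_pair hw₁ hw₂ hw₃ h₁₂ h₁₃ h₂₃ v
    (hS.mono (by simpa using Finset.coe_subset.mpr hSuv))

end EdgeDist

-- The cycle `C_N` on the values `0, …, N - 1`; `cycEdgeDist N a x` is the distance from `a` to
-- the edge `{x, x + 1}`.
def cycSucc (N x : ℕ) : ℕ := if x + 1 = N then 0 else x + 1

def cycDist (N a b : ℕ) : ℕ := min (Nat.dist a b) (N - Nat.dist a b)

def cycEdgeDist (N a x : ℕ) : ℕ := min (cycDist N a x) (cycDist N a (cycSucc N x))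

section CycleArithmetic

variable {N m k a b c x y x₁ x₂ y₁ y₂ : ℕ}

theorem cycDist_cycSucc_le (ha : a < N) (hx : x < N) :
    cycDist N a (cycSucc N x) ≤ cycDist N a x + 1 ∧
      cycDist N a x ≤ cycDist N a (cycSucc N x) + 1 := by
  simp only [cycSucc, cycDist, Nat.dist]
  split_ifs <;> omega

theorem cycDist_descent (ha : a < N) (hb : b < N) (hcb : cycSucc N c = b) (hab : a ≠ b) :
    cycDist N a (cycSucc N b) + 1 = cycDist N a b ∨ cycDist N a c + 1 = cycDist N a b := by
  subst hcb
  simp only [cycSucc, cycDist, Nat.dist] at *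
  split_ifs at * <;> omega

theorem cycDist_zero (hy : y < m) : cycDist m 0 y = min y (m - y) := by
  simp only [cycDist, Nat.dist]
  omega

theorem cycEdgeDist_zero (hx : x < m) : cycEdgeDist m 0 x = min x (m - 1 - x) := by
  simp only [cycEdgeDist, cycSucc, cycDist, Nat.dist]
  split_ifs <;> omega

theorem cycDist_antipode_add (hy : y < 2 * m) :
    cycDist (2 * m) m y + cycDist (2 * m) 0 y = m := by
  simp only [cycDist, Nat.dist]
  omega

/-- `D_0` differs by exactly one at the two ends of an edge of an even cycle, and `D_m = m - D_0`,
so `E_m + E_0 = (m - max) + min = m - 1`. -/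
theorem cycEdgeDist_antipode_add (hx : x < 2 * m) :
    cycEdgeDist (2 * m) m x + cycEdgeDist (2 * m) 0 x + 1 = m := by
  have hs : cycSucc (2 * m) x < 2 * m := by unfold cycSucc; split_ifs <;> omega
  have hstep : cycDist (2 * m) 0 (cycSucc (2 * m) x) = cycDist (2 * m) 0 x + 1 ∨
      cycDist (2 * m) 0 x = cycDist (2 * m) 0 (cycSucc (2 * m) x) + 1 := by
    rw [cycDist_zero hx, cycDist_zero hs]
    unfold cycSucc
    split_ifs <;> omega
  have := cycDist_antipode_add hx
  have := cycDist_antipode_add hs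
  unfold cycEdgeDist
  omega

theorem cycEdgeDist_quarter (hx : x < 4 * k) :
    cycEdgeDist (4 * k) k x =
      if x < k then k - 1 - x else if x < 3 * k then x - k else 5 * k - 1 - x := by
  simp only [cycEdgeDist, cycSucc, cycDist, Nat.dist]
  split_ifs <;> omega

theorem cycEdgeDist_zero_eq (hx₁ : x₁ < 4 * k) (hx₂ : x₂ < 4 * k)
    (h : cycEdgeDist (4 * k) 0 x₁ = cycEdgeDist (4 * k) 0 x₂) :
    x₁ = x₂ ∨ cycEdgeDist (4 * k) k x₁ + cycEdgeDist (4 * k) k x₂ + 1 = 2 * k := by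
  rw [cycEdgeDist_zero hx₁, cycEdgeDist_zero hx₂] at h
  obtain rfl | rfl : x₂ = x₁ ∨ x₂ = 4 * k - 1 - x₁ := by omega
  · exact .inl rfl
  · right
    rw [cycEdgeDist_quarter hx₁, cycEdgeDist_quarter hx₂]
    split_ifs <;> omega

theorem cycDist_quarter (hy : y < 4 * k) :
    cycDist (4 * k) k y = if y < k then k - y else if y < 3 * k then y - k else 5 * k - y := by
  simp only [cycDist, Nat.dist]
  split_ifs <;> omega

theorem cycDist_zero_eq (hy₁ : y₁ < 4 * k) (hy₂ : y₂ < 4 * k)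
    (h : cycDist (4 * k) 0 y₁ = cycDist (4 * k) 0 y₂) :
    y₁ = y₂ ∨ (cycDist (4 * k) k y₁ + cycDist (4 * k) k y₂ = 2 * k ∧
      cycDist (4 * k) k y₁ ≠ cycDist (4 * k) k y₂) := by
  rw [cycDist_zero hy₁, cycDist_zero hy₂] at h
  refine or_iff_not_imp_left.mpr fun hne => ?_
  obtain rfl : y₂ = 4 * k - y₁ := by omega
  rw [cycDist_quarter hy₁, cycDist_quarter hy₂]
  split_ifs <;> omega

end CycleArithmetic

section Cycle

variable {N : ℕ}

theorem val_finRotate (x : Fin N) : (finRotate N x).val = cycSucc N x.val := by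
  cases N with
  | zero => exact x.elim0
  | succ n => simp [Fin.val_add_one, cycSucc, Fin.ext_iff]

theorem cycleGraph_adj_iff_finRotate (hN : 2 ≤ N) {u v : Fin N} :
    (cycleGraph N).Adj u v ↔ v = finRotate N u ∨ u = finRotate N v := by
  obtain ⟨n, rfl⟩ : ∃ n, N = n + 2 := ⟨N - 2, by omega⟩
  rw [cycleGraph_adj, finRotate_apply, finRotate_apply, sub_eq_iff_eq_add',
    sub_eq_iff_eq_add', add_comm v, add_comm u, or_comm]

theorem cycleGraph_dist (hN : 2 ≤ N) (u v : Fin N) :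
    (cycleGraph N).dist u v = cycDist N u v := by
  refine dist_eq_of_descent (fun w : Fin N => cycDist N u w) (by simp [cycDist]) ?_ ?_ v
  · intro x y hxy
    rcases (cycleGraph_adj_iff_finRotate hN).mp hxy with rfl | rfl <;>
      simp only [val_finRotate]
    · exact (cycDist_cycSucc_le u.is_lt x.is_lt).1
    · exact (cycDist_cycSucc_le u.is_lt y.is_lt).2
  · intro v hvu
    have hwv : finRotate N ((finRotate N).symm v) = v := Equiv.apply_symm_apply _ v
    rcases cycDist_descent u.is_lt v.is_lt (by rw [← val_finRotate, hwv])
      (Fin.val_ne_of_ne (Ne.symm hvu)) with h | h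
    · refine ⟨finRotate N v, (cycleGraph_adj_iff_finRotate hN).mpr (.inr rfl), ?_⟩
      rwa [val_finRotate]
    · exact ⟨_, (cycleGraph_adj_iff_finRotate hN).mpr (.inl hwv.symm), h⟩

theorem cycleGraph_edgeDist (hN : 2 ≤ N) (a x : Fin N) :
    edgeDist (cycleGraph N) a s(x, finRotate N x) = cycEdgeDist N a x := by
  rw [edgeDist_mk, cycleGraph_dist hN, cycleGraph_dist hN, val_finRotate, cycEdgeDist]

theorem cycleGraph_degree (hN : 3 ≤ N) (v : Fin N) : (cycleGraph N).degree v = 2 := by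
  obtain ⟨n, rfl⟩ : ∃ n, N = n + 3 := ⟨N - 3, by omega⟩
  exact cycleGraph_degree_three_le

end Cycle

section Torus

variable {N M : ℕ}

theorem cycleGraph_boxProd_edge_cases (hN : 2 ≤ N) (hM : 2 ≤ M) {e : Sym2 (Fin N × Fin M)}
    (he : e ∈ (cycleGraph N □ cycleGraph M).edgeSet) :
    (∃ x y, e = s((x, y), (finRotate N x, y))) ∨ ∃ x y, e = s((x, y), (x, finRotate M y)) := by
  induction e using Sym2.ind with
  | _ p q =>
  obtain ⟨x, y⟩ := p
  obtain ⟨x', y'⟩ := q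
  simp only [mem_edgeSet, boxProd_adj] at he
  rcases he with ⟨h, rfl⟩ | ⟨h, rfl⟩
  · rcases (cycleGraph_adj_iff_finRotate hN).mp h with rfl | rfl
    · exact .inl ⟨_, _, rfl⟩
    · exact .inl ⟨_, _, Sym2.eq_swap⟩
  · rcases (cycleGraph_adj_iff_finRotate hM).mp h with rfl | rfl
    · exact .inr ⟨_, _, rfl⟩
    · exact .inr ⟨_, _, Sym2.eq_swap⟩

theorem edgeDist_cycleGraph_boxProd_horizontal (hN : 2 ≤ N) (hM : 2 ≤ M)
    (a : Fin N × Fin M) (x : Fin N) (y : Fin M) :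
    edgeDist (cycleGraph N □ cycleGraph M) a s((x, y), (finRotate N x, y)) =
      cycEdgeDist N a.1 x + cycDist M a.2 y := by
  rw [edgeDist_boxProd_left cycleGraph_preconnected cycleGraph_preconnected,
    cycleGraph_edgeDist hN, cycleGraph_dist hM]

theorem edgeDist_cycleGraph_boxProd_vertical (hN : 2 ≤ N) (hM : 2 ≤ M)
    (a : Fin N × Fin M) (x : Fin N) (y : Fin M) :
    edgeDist (cycleGraph N □ cycleGraph M) a s((x, y), (x, finRotate M y)) =
      cycDist N a.1 x + cycEdgeDist M a.2 y := by
  rw [edgeDist_boxProd_right cycleGraph_preconnected cycleGraph_preconnected,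
    cycleGraph_edgeDist hM, cycleGraph_dist hN]

theorem cycleGraph_boxProd_degree (hN : 3 ≤ N) (hM : 3 ≤ M) (v : Fin N × Fin M) :
    (cycleGraph N □ cycleGraph M).degree v = 4 := by
  rw [degree_boxProd, cycleGraph_degree hN, cycleGraph_degree hM]

end Torus

section Landmarks

variable {r t x₁ y₁ x₂ y₂ : ℕ}

theorem horizontal_eq_of_landmark_dist_eq (hx₁ : x₁ < 4 * r) (hx₂ : x₂ < 4 * r) (hy₁ : y₁ < 4 * t)
    (hy₂ : y₂ < 4 * t)
    (h₁ : cycEdgeDist (4 * r) 0 x₁ + cycDist (4 * t) 0 y₁ =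
      cycEdgeDist (4 * r) 0 x₂ + cycDist (4 * t) 0 y₂)
    (h₂ : cycEdgeDist (4 * r) 0 x₁ + cycDist (4 * t) (2 * t) y₁ =
      cycEdgeDist (4 * r) 0 x₂ + cycDist (4 * t) (2 * t) y₂)
    (h₃ : cycEdgeDist (4 * r) r x₁ + cycDist (4 * t) t y₁ =
      cycEdgeDist (4 * r) r x₂ + cycDist (4 * t) t y₂) :
    x₁ = x₂ ∧ y₁ = y₂ := by
  have hsum₁ := cycDist_antipode_add (m := 2 * t) (y := y₁) (by omega)
  have hsum₂ := cycDist_antipode_add (m := 2 * t) (y := y₂) (by omega)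
  rw [show 2 * (2 * t) = 4 * t by ring] at hsum₁ hsum₂
  rcases cycEdgeDist_zero_eq hx₁ hx₂ (by omega) with rfl | hx <;>
    rcases cycDist_zero_eq hy₁ hy₂ (by omega) with rfl | hy <;> omega

theorem vertical_eq_of_landmark_dist_eq (hx₁ : x₁ < 4 * r) (hx₂ : x₂ < 4 * r) (hy₁ : y₁ < 4 * t)
    (hy₂ : y₂ < 4 * t)
    (h₁ : cycDist (4 * r) 0 x₁ + cycEdgeDist (4 * t) 0 y₁ =
      cycDist (4 * r) 0 x₂ + cycEdgeDist (4 * t) 0 y₂)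
    (h₂ : cycDist (4 * r) 0 x₁ + cycEdgeDist (4 * t) (2 * t) y₁ =
      cycDist (4 * r) 0 x₂ + cycEdgeDist (4 * t) (2 * t) y₂)
    (h₃ : cycDist (4 * r) r x₁ + cycEdgeDist (4 * t) t y₁ =
      cycDist (4 * r) r x₂ + cycEdgeDist (4 * t) t y₂) :
    x₁ = x₂ ∧ y₁ = y₂ := by
  have hsum₁ := cycEdgeDist_antipode_add (m := 2 * t) (x := y₁) (by omega)
  have hsum₂ := cycEdgeDist_antipode_add (m := 2 * t) (x := y₂) (by omega)
  rw [show 2 * (2 * t) = 4 * t by ring] at hsum₁ hsum₂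
  rcases cycDist_zero_eq hx₁ hx₂ (by omega) with rfl | hx <;>
    rcases cycEdgeDist_zero_eq hy₁ hy₂ (by omega) with rfl | hy <;> omega

theorem landmark_dist_horizontal_ne_vertical (hy₁ : y₁ < 4 * t) (hy₂ : y₂ < 4 * t)
    (h₁ : cycEdgeDist (4 * r) 0 x₁ + cycDist (4 * t) 0 y₁ =
      cycDist (4 * r) 0 x₂ + cycEdgeDist (4 * t) 0 y₂)
    (h₂ : cycEdgeDist (4 * r) 0 x₁ + cycDist (4 * t) (2 * t) y₁ =
      cycDist (4 * r) 0 x₂ + cycEdgeDist (4 * t) (2 * t) y₂) :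
    False := by
  have hD := cycDist_antipode_add (m := 2 * t) (y := y₁) (by omega)
  have hE := cycEdgeDist_antipode_add (m := 2 * t) (x := y₂) (by omega)
  rw [show 2 * (2 * t) = 4 * t by ring] at hD hE
  omega

end Landmarks

theorem isEdgeMetricGenerator_torus {r t : ℕ} (hr : 1 ≤ r) (ht : 1 ≤ t) :
    IsEdgeMetricGenerator (cycleGraph (4 * r) □ cycleGraph (4 * t))
      ↑({(⟨0, by omega⟩, ⟨0, by omega⟩), (⟨0, by omega⟩, ⟨2 * t, by omega⟩),
        (⟨r, by omega⟩, ⟨t, by omega⟩)} : Finset (Fin (4 * r) × Fin (4 * t))) := by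
  intro e₁ he₁ e₂ he₂ hne
  by_contra! hsame
  have h₁ := hsame (⟨0, by omega⟩, ⟨0, by omega⟩) (by simp)
  have h₂ := hsame (⟨0, by omega⟩, ⟨2 * t, by omega⟩) (by simp)
  have h₃ := hsame (⟨r, by omega⟩, ⟨t, by omega⟩) (by simp)
  have hN : 2 ≤ 4 * r := by omega
  have hM : 2 ≤ 4 * t := by omega
  rcases cycleGraph_boxProd_edge_cases hN hM he₁ with ⟨x₁, y₁, rfl⟩ | ⟨x₁, y₁, rfl⟩ <;>
    rcases cycleGraph_boxProd_edge_cases hN hM he₂ with ⟨x₂, y₂, rfl⟩ | ⟨x₂, y₂, rfl⟩ <;>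
    simp only [edgeDist_cycleGraph_boxProd_horizontal hN hM,
      edgeDist_cycleGraph_boxProd_vertical hN hM] at h₁ h₂ h₃
  · obtain ⟨hx, hy⟩ :=
      horizontal_eq_of_landmark_dist_eq x₁.is_lt x₂.is_lt y₁.is_lt y₂.is_lt h₁ h₂ h₃
    exact hne (by rw [Fin.ext hx, Fin.ext hy])
  · exact landmark_dist_horizontal_ne_vertical y₁.is_lt y₂.is_lt h₁ h₂
  · exact landmark_dist_horizontal_ne_vertical y₂.is_lt y₁.is_lt h₁.symm h₂.symm
  · obtain ⟨hx, hy⟩ :=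
      vertical_eq_of_landmark_dist_eq x₁.is_lt x₂.is_lt y₁.is_lt y₂.is_lt h₁ h₂ h₃
    exact hne (by rw [Fin.ext hx, Fin.ext hy])

theorem edim_torus (r t : ℕ) (hr : 1 ≤ r) (ht : 1 ≤ t) :
    edim (cycleGraph (4 * r) □ cycleGraph (4 * t)) = 3 := by
  refine IsLeast.csInf_eq ⟨⟨_, ?_, isEdgeMetricGenerator_torus hr ht⟩, ?_⟩
  · refine Finset.card_eq_three.mpr ⟨_, _, _, ?_, ?_, ?_, rfl⟩ <;>
      simp only [ne_eq, Prod.ext_iff, Fin.ext_iff] <;> omega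
  · rintro k ⟨S, rfl, hS⟩
    have : Nonempty (Fin (4 * r) × Fin (4 * t)) := ⟨(⟨0, by omega⟩, ⟨0, by omega⟩)⟩
    refine three_le_card_of_isEdgeMetricGenerator (fun v => ?_) hS
    rw [cycleGraph_boxProd_degree (by omega) (by omega)]
    omega
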